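/- arXiv:1611.04538 — 4 statements merged into one kernel-verified Lean document; each statement's English description precedes it below -/
import Mathlib

section
/- Let (α, 𝒜, μ) and (β, ℬ, ν) be nonzero finite measure spaces and let f : α × β → [0,∞) be measurable with ∫ f d(μ×ν) = 1. Define the marginal f_X(x) := ∫ f(x,y) dν(y). Then for every τ > 0 there exist K ∈ ℕ, a measurable partition A_1, …, A_K of α, and measurable functions q_1, …, q_K : β → [0,∞) with ∫ q_i dν = 1 for each i, such that ∫ | (∑_{i=1}^K 1_{A_i}(x) q_i(y)) · f_X(x) − f(x,y) | d(μ×ν)(x,y) < τ. -/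
/-!
Approximate `f` in `L¹(μ × ν)` by a step function `G (x, y) = H (φ x) y` that is simple in `y`
and constant in `x` on the cells of a finite measurable partition: the sets whose indicators are of
this form make up an algebra generating the product σ-algebra, hence are measure-dense. Truncating
`H` at `0` and normalising each `H i` to a probability density `q i` at most doubles the error,
because for every `x` in the cell `i`,
`∫ |q i y * fX x - f (x, y)| dν ≤ |fX x - ∫ H i| + ∫ |H i - f (x, ·)| ≤ 2 ∫ |H i - f (x, ·)|`.
-/

open MeasureTheory Set
open scoped symmDiff

lemma sum_indicator_preimage_singleton {α ι M : Type*} [Fintype ι] [AddCommMonoid M]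
    (φ : α → ι) (g : ι → α → M) (x : α) :
    ∑ i, (φ ⁻¹' {i}).indicator (g i) x = g (φ x) x := by
  refine (Fintype.sum_eq_single (φ x) fun i hi => ?_).trans
    (indicator_of_mem (show x ∈ φ ⁻¹' {φ x} from rfl) _)
  exact indicator_of_notMem (show x ∉ φ ⁻¹' {i} from Ne.symm hi) _

lemma integral_abs_add_le {γ : Type*} [MeasurableSpace γ] {m : Measure γ} {f g : γ → ℝ}
    (hf : Integrable f m) (hg : Integrable g m) :
    ∫ x, |f x + g x| ∂m ≤ ∫ x, |f x| ∂m + ∫ x, |g x| ∂m := by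
  rw [← integral_add hf.abs hg.abs]
  exact integral_mono (hf.add hg).abs (hf.abs.add hg.abs) fun x => abs_add_le _ _

lemma integral_abs_indicator_const_sub {γ : Type*} [MeasurableSpace γ] (m : Measure γ)
    {S T : Set γ} (hS : MeasurableSet S) (hT : MeasurableSet T) (c : ℝ) :
    ∫ x, |S.indicator (fun _ => c) x - T.indicator (fun _ => c) x| ∂m = |c| * m.real (S ∆ T) := by
  have hpt : (fun x => |S.indicator (fun _ => c) x - T.indicator (fun _ => c) x|)
      = (S ∆ T).indicator fun _ => |c| := by
    ext x
    by_cases hxS : x ∈ S <;> by_cases hxT : x ∈ T <;> simp [hxS, hxT, mem_symmDiff]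
  rw [hpt, integral_indicator_const _ (hS.symmDiff hT), smul_eq_mul, mul_comm]

lemma integral_abs_max_zero_sub_le {γ : Type*} [MeasurableSpace γ] {m : Measure γ}
    {f g : γ → ℝ} (hf0 : ∀ x, 0 ≤ f x) (hf : Integrable f m) (hg : Integrable g m) :
    ∫ x, |max (g x) 0 - f x| ∂m ≤ ∫ x, |f x - g x| ∂m :=
  integral_mono (hg.pos_part.sub hf).abs (hf.sub hg).abs fun x => by
    rw [abs_sub_comm]
    simpa only [max_eq_left (hf0 x)] using abs_max_sub_max_le_abs (f x) (g x) 0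

lemma integrable_mul_comp_fst {α β ι : Type*} [MeasurableSpace α] [MeasurableSpace β]
    [Fintype ι] [MeasurableSpace ι] [MeasurableSingletonClass ι] {μ : Measure α}
    {ν : Measure β} [SFinite ν] {φ : α → ι} (hφ : Measurable φ) {u : α → ℝ} (hu : Integrable u μ) {g : ι → β → ℝ}
    (hg : ∀ i, Integrable (g i) ν) :
    Integrable (fun p : α × β => u p.1 * g (φ p.1) p.2) (μ.prod ν) := by
  have hsum : (fun p : α × β => u p.1 * g (φ p.1) p.2)
      = fun p => ∑ i, (φ ⁻¹' {i}).indicator u p.1 * g i p.2 := by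
    ext p
    exact (sum_indicator_preimage_singleton φ (fun i x => u x * g i p.2) p.1).symm.trans
      (Finset.sum_congr rfl fun i _ => indicator_mul_left _ _ _)
  rw [hsum]
  exact integrable_finsetSum _ fun i _ =>
    (hu.indicator (hφ (measurableSet_singleton i))).mul_prod (hg i)

section Step

variable {α β : Type*} [MeasurableSpace α] [MeasurableSpace β]

/-- The fibres of `φ` encode a finite measurable partition of `α`. -/
def IsStepInFst (G : α × β → ℝ) : Prop :=
  ∃ (n : ℕ) (φ : α → Fin n) (H : Fin n → SimpleFunc β ℝ),
    Measurable φ ∧ G = fun p => H (φ p.1) p.2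

namespace IsStepInFst

lemma map₂ {G₁ G₂ : α × β → ℝ} (op : ℝ → ℝ → ℝ) (h₁ : IsStepInFst G₁) (h₂ : IsStepInFst G₂) :
    IsStepInFst fun p => op (G₁ p) (G₂ p) := by
  obtain ⟨n, φ₁, H₁, hφ₁, rfl⟩ := h₁
  obtain ⟨m, φ₂, H₂, hφ₂, rfl⟩ := h₂
  let e : Fin n × Fin m ≃ Fin (n * m) := finProdFinEquiv
  refine ⟨n * m, fun x => e (φ₁ x, φ₂ x),
    fun k => ((H₁ (e.symm k).1).pair (H₂ (e.symm k).2)).map (Function.uncurry op),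
    (measurable_of_countable _).comp (hφ₁.prodMk hφ₂), ?_⟩
  simp

lemma comp {G : α × β → ℝ} (hG : IsStepInFst G) (g : ℝ → ℝ) : IsStepInFst (g ∘ G) :=
  map₂ (fun a _ => g a) hG hG

end IsStepInFst

lemma isStepInFst_snd (H : SimpleFunc β ℝ) : IsStepInFst fun p : α × β => H p.2 :=
  ⟨1, fun _ => 0, fun _ => H, measurable_const, rfl⟩

lemma isStepInFst_indicator_fst {s : Set α} (hs : MeasurableSet s) :
    IsStepInFst fun p : α × β => s.indicator 1 p.1 := by
  classical
  refine ⟨2, fun x => if x ∈ s then 1 else 0, fun i => SimpleFunc.const β ((i : ℕ) : ℝ),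
    measurable_const.ite hs measurable_const, ?_⟩
  ext p
  by_cases hp : p.1 ∈ s <;> simp [hp]

lemma isStepInFst_indicator_prod {s : Set α} {t : Set β} (hs : MeasurableSet s)
    (ht : MeasurableSet t) : IsStepInFst ((s ×ˢ t).indicator 1) := by
  convert (isStepInFst_indicator_fst hs).map₂ (· * ·)
    (isStepInFst_snd ((SimpleFunc.const β (1 : ℝ)).restrict t)) using 1
  ext ⟨x, y⟩
  simp [SimpleFunc.coe_restrict _ ht, indicator_prod_one]

def stepSets : Set (Set (α × β)) := {S | MeasurableSet S ∧ IsStepInFst (S.indicator 1)}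

lemma isSetAlgebra_stepSets : IsSetAlgebra (stepSets (α := α) (β := β)) where
  empty_mem := ⟨MeasurableSet.empty, by
    simpa using isStepInFst_snd (α := α) (SimpleFunc.const β (0 : ℝ))⟩
  compl_mem := fun {S} ⟨hS, hG⟩ => ⟨hS.compl, by
    convert hG.comp (1 - ·) using 1
    rw [indicator_compl]; rfl⟩
  union_mem := fun {S T} ⟨hS, hGS⟩ ⟨hT, hGT⟩ => ⟨hS.union hT, by
    convert hGS.map₂ (fun a b => a + b - a * b) hGT using 1
    ext p
    by_cases hpS : p ∈ S <;> by_cases hpT : p ∈ T <;> simp [hpS, hpT]⟩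

lemma generateFrom_stepSets :
    MeasurableSpace.generateFrom (stepSets (α := α) (β := β)) = Prod.instMeasurableSpace := by
  refine le_antisymm (MeasurableSpace.generateFrom_le fun S hS => hS.1) ?_
  rw [← generateFrom_prod]
  refine MeasurableSpace.generateFrom_mono ?_
  rintro _ ⟨s, hs, t, ht, rfl⟩
  exact ⟨hs.prod ht, isStepInFst_indicator_prod hs ht⟩

lemma IsStepInFst.integrable {G : α × β → ℝ} (hG : IsStepInFst G) (μ : Measure α)
    (ν : Measure β) [IsFiniteMeasure μ] [IsFiniteMeasure ν] : Integrable G (μ.prod ν) := by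
  obtain ⟨n, φ, H, hφ, rfl⟩ := hG
  simpa using integrable_mul_comp_fst hφ (integrable_const (1 : ℝ))
    fun i => (H i).integrable_of_isFiniteMeasure (μ := ν)

end Step

section Approx

variable {α β : Type*} [MeasurableSpace α] [MeasurableSpace β]
  (μ : Measure α) (ν : Measure β) [IsFiniteMeasure μ] [IsFiniteMeasure ν]

lemma exists_mem_stepSets_measureReal_symmDiff_lt {S : Set (α × β)} (hS : MeasurableSet S)
    {ε : ℝ} (hε : 0 < ε) : ∃ T ∈ stepSets, (μ.prod ν).real (S ∆ T) < ε := by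
  obtain ⟨T, hT, hST⟩ := (Measure.MeasureDense.of_generateFrom_isSetAlgebra_finite (μ.prod ν)
    isSetAlgebra_stepSets generateFrom_stepSets.symm).approx S hS (measure_ne_top _ _) ε hε
  exact ⟨T, hT, ENNReal.toReal_lt_of_lt_ofReal hST⟩

lemma MeasureTheory.SimpleFunc.exists_isStepInFst_integral_abs_sub_lt
    (s : SimpleFunc (α × β) ℝ) {ε : ℝ} (hε : 0 < ε) :
    ∃ G, IsStepInFst G ∧ ∫ p, |s p - G p| ∂(μ.prod ν) < ε := by
  induction s using SimpleFunc.induction generalizing ε with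
  | @const c S hS =>
    obtain ⟨T, ⟨hT, hGT⟩, hST⟩ := exists_mem_stepSets_measureReal_symmDiff_lt μ ν hS
      (div_pos hε (by positivity : 0 < |c| + 1))
    have hcT : (T.indicator fun _ => c) = (c * ·) ∘ T.indicator 1 := by
      ext p; by_cases hp : p ∈ T <;> simp [hp]
    have hcS : ⇑(SimpleFunc.piecewise S hS (.const _ c) (.const _ 0))
        = S.indicator fun _ => c := by
      ext p; by_cases hp : p ∈ S <;> simp [hp]
    refine ⟨T.indicator fun _ => c, hcT ▸ hGT.comp (c * ·), ?_⟩
    rw [hcS, integral_abs_indicator_const_sub _ hS hT]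
    calc |c| * (μ.prod ν).real (S ∆ T) ≤ (|c| + 1) * (μ.prod ν).real (S ∆ T) := by
          gcongr; linarith
      _ < (|c| + 1) * (ε / (|c| + 1)) := by gcongr
      _ = ε := mul_div_cancel₀ ε (by positivity)
  | @add s₁ s₂ _ h₁ h₂ =>
    obtain ⟨G₁, hG₁, hlt₁⟩ := h₁ (half_pos hε)
    obtain ⟨G₂, hG₂, hlt₂⟩ := h₂ (half_pos hε)
    refine ⟨fun p => G₁ p + G₂ p, hG₁.map₂ (· + ·) hG₂, ?_⟩
    calc ∫ p, |(s₁ + s₂) p - (G₁ p + G₂ p)| ∂(μ.prod ν)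
        = ∫ p, |(s₁ p - G₁ p) + (s₂ p - G₂ p)| ∂(μ.prod ν) := by
          simp only [SimpleFunc.coe_add, Pi.add_apply, add_sub_add_comm]
      _ ≤ ∫ p, |s₁ p - G₁ p| ∂(μ.prod ν) + ∫ p, |s₂ p - G₂ p| ∂(μ.prod ν) :=
          integral_abs_add_le ((s₁.integrable_of_isFiniteMeasure).sub (hG₁.integrable μ ν))
            ((s₂.integrable_of_isFiniteMeasure).sub (hG₂.integrable μ ν))
      _ < ε := by linarith

lemma MeasureTheory.Integrable.exists_isStepInFst_integral_abs_sub_lt {f : α × β → ℝ}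
    (hf : Integrable f (μ.prod ν)) {ε : ℝ} (hε : 0 < ε) :
    ∃ G, IsStepInFst G ∧ ∫ p, |f p - G p| ∂(μ.prod ν) < ε := by
  obtain ⟨s, hfs, -⟩ := (memLp_one_iff_integrable.2 hf).exists_simpleFunc_eLpNorm_sub_lt
    ENNReal.one_ne_top (ENNReal.ofReal_pos.2 (half_pos hε)).ne'
  have hs := s.integrable_of_isFiniteMeasure (μ := μ.prod ν)
  have hfs' : ∫ p, |f p - s p| ∂(μ.prod ν) < ε / 2 := by
    have h := (hf.sub hs).aestronglyMeasurable
    have := ENNReal.toReal_lt_of_lt_ofReal hfs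
    rwa [toReal_eLpNorm h, lpNorm_one_eq_integral_norm h] at this
  obtain ⟨G, hG, hsG⟩ := s.exists_isStepInFst_integral_abs_sub_lt μ ν (half_pos hε)
  refine ⟨G, hG, ?_⟩
  calc ∫ p, |f p - G p| ∂(μ.prod ν) = ∫ p, |(f p - s p) + (s p - G p)| ∂(μ.prod ν) := by
        simp only [sub_add_sub_cancel]
    _ ≤ ∫ p, |f p - s p| ∂(μ.prod ν) + ∫ p, |s p - G p| ∂(μ.prod ν) :=
        integral_abs_add_le (hf.sub hs) (hs.sub (hG.integrable μ ν))
    _ < ε := by linarith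

end Approx

section Density

variable {β : Type*} [MeasurableSpace β] (ν : Measure β)

/-- For `h ≥ 0` the case `∫ h = 0` means `h = 0` a.e.; the uniform fallback keeps the result a
probability density. -/
noncomputable def normalizedDensity (h : β → ℝ) : β → ℝ :=
  if ∫ y, h y ∂ν = 0 then fun _ => (ν.real univ)⁻¹ else fun y => h y / ∫ y, h y ∂ν

variable {ν} {h : β → ℝ}

lemma measurable_normalizedDensity (hh : Measurable h) : Measurable (normalizedDensity ν h) := by
  unfold normalizedDensity
  split_ifs
  exacts [measurable_const, hh.div_const _]

lemma normalizedDensity_nonneg (hh : 0 ≤ h) : 0 ≤ normalizedDensity ν h := by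
  unfold normalizedDensity
  split_ifs
  exacts [fun _ => inv_nonneg.2 measureReal_nonneg,
    fun y => div_nonneg (hh y) (integral_nonneg hh)]

variable [IsFiniteMeasure ν]

lemma integrable_normalizedDensity (hh : Integrable h ν) :
    Integrable (normalizedDensity ν h) ν := by
  unfold normalizedDensity
  split_ifs
  exacts [integrable_const _, hh.div_const _]

lemma integral_normalizedDensity [NeZero ν] : ∫ y, normalizedDensity ν h y ∂ν = 1 := by
  unfold normalizedDensity
  split_ifs with hc
  · rw [integral_const, smul_eq_mul, mul_inv_cancel₀ measureReal_univ_ne_zero]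
  · rw [integral_div, div_self hc]

lemma integral_abs_normalizedDensity_mul_sub [NeZero ν] (hh : 0 ≤ h) (hint : Integrable h ν)
    {t : ℝ} (ht : 0 ≤ t) :
    ∫ y, |normalizedDensity ν h y * t - h y| ∂ν = |t - ∫ y, h y ∂ν| := by
  by_cases hc : ∫ y, h y ∂ν = 0
  · have hzero : h =ᵐ[ν] 0 := (integral_eq_zero_iff_of_nonneg hh hint).1 hc
    have hcongr : (fun y => |normalizedDensity ν h y * t - h y|)
        =ᵐ[ν] fun y => normalizedDensity ν h y * t := by
      filter_upwards [hzero] with y hy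
      rw [hy, Pi.zero_apply, sub_zero,
        abs_of_nonneg (mul_nonneg (normalizedDensity_nonneg hh y) ht)]
    rw [integral_congr_ae hcongr, integral_mul_const, integral_normalizedDensity, one_mul, hc,
      sub_zero, abs_of_nonneg ht]
  · set c := ∫ y, h y ∂ν
    have hc0 : 0 ≤ c := integral_nonneg hh
    have hpt : ∀ y, |normalizedDensity ν h y * t - h y| = h y * (|t - c| / c) := by
      intro y
      rw [normalizedDensity, if_neg hc,
        show h y / c * t - h y = h y / c * (t - c) by field_simp,
        abs_mul, abs_of_nonneg (div_nonneg (hh y) hc0), div_mul_eq_mul_div, mul_div_assoc]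
    simp_rw [hpt]
    rw [integral_mul_const, mul_div_cancel₀ _ hc]

lemma integral_abs_normalizedDensity_mul_integral_sub_le [NeZero ν] (hh : 0 ≤ h)
    (hint : Integrable h ν) {g : β → ℝ} (hg : Integrable g ν) (hg0 : 0 ≤ ∫ y, g y ∂ν) :
    ∫ y, |normalizedDensity ν h y * ∫ y, g y ∂ν - g y| ∂ν ≤ 2 * ∫ y, |h y - g y| ∂ν := by
  have hmass : |(∫ y, g y ∂ν) - ∫ y, h y ∂ν| ≤ ∫ y, |h y - g y| ∂ν := by
    rw [abs_sub_comm, ← integral_sub hint hg]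
    exact abs_integral_le_integral_abs
  calc ∫ y, |normalizedDensity ν h y * ∫ y, g y ∂ν - g y| ∂ν
      = ∫ y, |(normalizedDensity ν h y * ∫ y, g y ∂ν - h y) + (h y - g y)| ∂ν := by
        simp_rw [sub_add_sub_cancel]
    _ ≤ ∫ y, |normalizedDensity ν h y * ∫ y, g y ∂ν - h y| ∂ν + ∫ y, |h y - g y| ∂ν :=
        integral_abs_add_le (((integrable_normalizedDensity hint).mul_const _).sub hint)
          (hint.sub hg)
    _ ≤ 2 * ∫ y, |h y - g y| ∂ν := by
        rw [integral_abs_normalizedDensity_mul_sub hh hint hg0]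
        linarith

end Density

lemma integral_abs_normalizedDensity_comp_mul_marginal_sub_le {α β ι : Type*}
    [MeasurableSpace α] [MeasurableSpace β] [Fintype ι] [MeasurableSpace ι]
    [MeasurableSingletonClass ι] {μ : Measure α} {ν : Measure β} [IsFiniteMeasure μ]
    [IsFiniteMeasure ν] [NeZero ν] {f : α × β → ℝ} (hf : Integrable f (μ.prod ν)) (hf0 : 0 ≤ f)
    {φ : α → ι} (hφ : Measurable φ) {h : ι → β → ℝ} (hh : ∀ i, 0 ≤ h i)
    (hint : ∀ i, Integrable (h i) ν) :
    ∫ p, |normalizedDensity ν (h (φ p.1)) p.2 * (∫ y, f (p.1, y) ∂ν) - f p| ∂(μ.prod ν)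
      ≤ 2 * ∫ p, |h (φ p.1) p.2 - f p| ∂(μ.prod ν) := by
  have hF : Integrable
      (fun p : α × β => normalizedDensity ν (h (φ p.1)) p.2 * ∫ y, f (p.1, y) ∂ν) (μ.prod ν) := by
    simpa only [mul_comm] using integrable_mul_comp_fst hφ hf.integral_prod_left
      fun i => integrable_normalizedDensity (hint i)
  have hH : Integrable (fun p : α × β => h (φ p.1) p.2) (μ.prod ν) := by
    simpa using integrable_mul_comp_fst hφ (integrable_const (1 : ℝ)) hint
  rw [integral_prod (fun p => |normalizedDensity ν (h (φ p.1)) p.2 * (∫ y, f (p.1, y) ∂ν) - f p|)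
    (hF.sub hf).abs, integral_prod (fun p => |h (φ p.1) p.2 - f p|) (hH.sub hf).abs,
    ← integral_const_mul]
  refine integral_mono_ae (hF.sub hf).abs.integral_prod_left
    ((hH.sub hf).abs.integral_prod_left.const_mul 2) ?_
  filter_upwards [hf.prod_right_ae] with x hfx
  exact integral_abs_normalizedDensity_mul_integral_sub_le (hh _) (hint _) hfx
    (integral_nonneg fun y => hf0 _)

theorem stmt0_general {α β : Type*} [MeasurableSpace α] [MeasurableSpace β]
    (μ : Measure α) (ν : Measure β) [IsFiniteMeasure μ] [IsFiniteMeasure ν]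
    (hν : ν ≠ 0)
    (f : α × β → ℝ) (hf_nonneg : ∀ p, 0 ≤ f p)
    (hf_int : ∫ p, f p ∂(μ.prod ν) = 1)
    (fX : α → ℝ) (hfX : ∀ x, fX x = ∫ y, f (x, y) ∂ν)
    (τ : ℝ) (hτ : 0 < τ) :
    ∃ (K : ℕ) (A : Fin K → Set α) (q : Fin K → β → ℝ),
      (∀ i, MeasurableSet (A i)) ∧
      (Pairwise fun i j => Disjoint (A i) (A j)) ∧
      (⋃ i, A i) = Set.univ ∧
      (∀ i, Measurable (q i)) ∧
      (∀ i y, 0 ≤ q i y) ∧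
      (∀ i, ∫ y, q i y ∂ν = 1) ∧
      ∫ p, |(∑ i, Set.indicator (A i) (fun _ => q i p.2) p.1) * fX p.1 - f p|
          ∂(μ.prod ν) < τ := by
  have : NeZero ν := ⟨hν⟩
  have hf : Integrable f (μ.prod ν) := Integrable.of_integral_ne_zero (by simp [hf_int])
  obtain ⟨G, hG, hfG⟩ := hf.exists_isStepInFst_integral_abs_sub_lt μ ν (half_pos hτ)
  obtain ⟨n, φ, H, hφ, rfl⟩ := id hG
  set h : Fin n → β → ℝ := fun i y => max (H i y) 0
  have hh : ∀ i, 0 ≤ h i := fun i y => le_max_right _ _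
  have hint : ∀ i, Integrable (h i) ν := fun i => (H i).integrable_of_isFiniteMeasure.pos_part
  refine ⟨n, fun i => φ ⁻¹' {i}, fun i => normalizedDensity ν (h i),
    fun i => hφ (measurableSet_singleton i),
    fun i j hij => (disjoint_singleton.2 hij).preimage φ,
    by rw [← preimage_iUnion, iUnion_of_singleton, preimage_univ],
    fun i => measurable_normalizedDensity ((H i).measurable.max measurable_const),
    fun i => normalizedDensity_nonneg (hh i), fun i => integral_normalizedDensity, ?_⟩
  have htrunc := integral_abs_max_zero_sub_le hf_nonneg hf (hG.integrable μ ν)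
  calc ∫ p, |(∑ i, (φ ⁻¹' {i}).indicator (fun _ => normalizedDensity ν (h i) p.2) p.1) * fX p.1
          - f p| ∂(μ.prod ν)
      = ∫ p, |normalizedDensity ν (h (φ p.1)) p.2 * (∫ y, f (p.1, y) ∂ν) - f p| ∂(μ.prod ν) := by
        simp_rw [sum_indicator_preimage_singleton, hfX]
    _ ≤ 2 * ∫ p, |h (φ p.1) p.2 - f p| ∂(μ.prod ν) :=
        integral_abs_normalizedDensity_comp_mul_marginal_sub_le hf hf_nonneg hφ hh hint
    _ < τ := by linarith

/-- Deterministic approximation core of Theorem 2 (large support): any joint probability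
density `f` on `α × β` can be approximated arbitrarily well, in the `f_X`-weighted
integrated `L¹` sense, by a conditional density that is piecewise constant in the first
coordinate over a finite measurable partition of `α`. -/
theorem stmt0 {α β : Type*} [MeasurableSpace α] [MeasurableSpace β]
    (μ : Measure α) (ν : Measure β) [IsFiniteMeasure μ] [IsFiniteMeasure ν]
    (hμ : μ ≠ 0) (hν : ν ≠ 0)
    (f : α × β → ℝ) (hf_meas : Measurable f) (hf_nonneg : ∀ p, 0 ≤ f p)
    (hf_int : ∫ p, f p ∂(μ.prod ν) = 1)
    (fX : α → ℝ) (hfX : ∀ x, fX x = ∫ y, f (x, y) ∂ν)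
    (τ : ℝ) (hτ : 0 < τ) :
    ∃ (K : ℕ) (A : Fin K → Set α) (q : Fin K → β → ℝ),
      (∀ i, MeasurableSet (A i)) ∧
      (Pairwise fun i j => Disjoint (A i) (A j)) ∧
      (⋃ i, A i) = Set.univ ∧
      (∀ i, Measurable (q i)) ∧
      (∀ i y, 0 ≤ q i y) ∧
      (∀ i, ∫ y, q i y ∂ν = 1) ∧
      ∫ p, |(∑ i, Set.indicator (A i) (fun _ => q i p.2) p.1) * fX p.1 - f p|
          ∂(μ.prod ν) < τ :=
  stmt0_general μ ν hν f hf_nonneg hf_int fX hfX τ hτ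
end

section
/- Let (α, 𝒜, μ) and (β, ℬ, ν) be σ-finite measure spaces. Let f, f̃ : α × β → [0,∞) be integrable with respect to μ×ν, let f_X(x) := ∫ f(x,y) dν(y) and f̃_X(x) := ∫ f̃(x,y) dν(y), and let q : α × β → [0,∞) be measurable with ∫ q(x,y) dν(y) = 1 for every x ∈ α. Then ∫ | q(x,y)·f_X(x) − f(x,y) | d(μ×ν) ≤ ∫ | q(x,y)·f̃_X(x) − f̃(x,y) | d(μ×ν) + 2 ∫ | f̃ − f | d(μ×ν). -/
/-!
Write `g = q f_X - f` and `g̃ = q f̃_X - f̃`. Pointwise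
`g = g̃ - q (f̃_X - f_X) + (f̃ - f)`, and since `q(x, ·)` is a probability density the middle
term integrates to `∫ |f̃_X - f_X| dμ`, which is at most `∫ |f̃ - f| d(μ×ν)` because taking
marginals is an `L¹` contraction.
-/

open MeasureTheory

lemma abs_mul_sub_le_of_nonneg {q a b c d : ℝ} (hq : 0 ≤ q) :
    |q * a - c| ≤ |q * b - d| + q * |b - a| + |d - c| :=
  calc |q * a - c| = |(q * b - d) - q * (b - a) + (d - c)| := by congr 1; ring
    _ ≤ |q * b - d| + |q * (b - a)| + |d - c| :=
      (abs_add_le _ _).trans (add_le_add_left (abs_sub _ _) _)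
    _ = |q * b - d| + q * |b - a| + |d - c| := by rw [abs_mul, abs_of_nonneg hq]

structure IsCondDensity {α β : Type*} [MeasurableSpace α] [MeasurableSpace β]
    (ν : Measure β) (q : α × β → ℝ) : Prop where
  measurable : Measurable q
  nonneg : ∀ p, 0 ≤ q p
  integral_eq_one : ∀ x, ∫ y, q (x, y) ∂ν = 1

namespace IsCondDensity

variable {α β : Type*} [MeasurableSpace α] [MeasurableSpace β] {μ : Measure α} {ν : Measure β}
  [SFinite ν] {q : α × β → ℝ}

lemma integrable_mul_comp_fst (hq : IsCondDensity ν q) {F : α → ℝ} (hF : Integrable F μ) :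
    Integrable (fun p => q p * F p.1) (μ.prod ν) := by
  refine (integrable_prod_iff (hq.measurable.aestronglyMeasurable.mul hF.1.comp_fst)).2
    ⟨ae_of_all _ fun x => ?_, ?_⟩
  · show Integrable (fun y => q (x, y) * F x) ν
    exact (Integrable.of_integral_ne_zero (f := fun y => q (x, y))
      (by rw [hq.integral_eq_one x]; exact one_ne_zero)).mul_const _
  · simpa [abs_of_nonneg (hq.nonneg _), integral_mul_const, hq.integral_eq_one] using hF.norm

lemma integral_mul_comp_fst [SFinite μ] (hq : IsCondDensity ν q) {F : α → ℝ}
    (hF : Integrable F μ) : ∫ p, q p * F p.1 ∂(μ.prod ν) = ∫ x, F x ∂μ := by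
  rw [integral_prod _ (hq.integrable_mul_comp_fst hF)]
  simp [integral_mul_const, hq.integral_eq_one]

end IsCondDensity

lemma integral_abs_sub_marginal_le {α β : Type*} [MeasurableSpace α] [MeasurableSpace β]
    {μ : Measure α} {ν : Measure β} [SFinite μ] [SFinite ν] {f g : α × β → ℝ}
    (hf : Integrable f (μ.prod ν)) (hg : Integrable g (μ.prod ν)) :
    ∫ x, |∫ y, f (x, y) ∂ν - ∫ y, g (x, y) ∂ν| ∂μ ≤ ∫ p, |f p - g p| ∂(μ.prod ν) := by
  have hint : Integrable (fun p => |f p - g p|) (μ.prod ν) := (hf.sub hg).abs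
  rw [integral_prod _ hint]
  refine integral_mono_ae (hf.integral_prod_left.sub hg.integral_prod_left).abs
    hint.integral_prod_left ?_
  filter_upwards [hf.prod_right_ae, hg.prod_right_ae] with x hfx hgx
  rw [← integral_sub hfx hgx]
  exact abs_integral_le_integral_abs

theorem stmt12_general {α β : Type*} [MeasurableSpace α] [MeasurableSpace β]
    (μ : Measure α) (ν : Measure β) [SigmaFinite μ] [SigmaFinite ν]
    (f ftil : α × β → ℝ)
    (hf_int : Integrable f (μ.prod ν)) (hftil_int : Integrable ftil (μ.prod ν))
    (fX ftilX : α → ℝ)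
    (hfX : ∀ x, fX x = ∫ y, f (x, y) ∂ν) (hftilX : ∀ x, ftilX x = ∫ y, ftil (x, y) ∂ν)
    (q : α × β → ℝ) (hq_meas : Measurable q) (hq_nonneg : ∀ p, 0 ≤ q p)
    (hq_int : ∀ x, ∫ y, q (x, y) ∂ν = 1) :
    ∫ p, |q p * fX p.1 - f p| ∂(μ.prod ν)
      ≤ (∫ p, |q p * ftilX p.1 - ftil p| ∂(μ.prod ν))
        + 2 * ∫ p, |ftil p - f p| ∂(μ.prod ν) := by
  have hq : IsCondDensity ν q := ⟨hq_meas, hq_nonneg, hq_int⟩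
  have hfX_int : Integrable fX μ := by rw [funext hfX]; exact hf_int.integral_prod_left
  have hftilX_int : Integrable ftilX μ := by
    rw [funext hftilX]; exact hftil_int.integral_prod_left
  have hmarginal := integral_abs_sub_marginal_le hftil_int hf_int
  simp only [← hfX, ← hftilX] at hmarginal
  have hgtil_int : Integrable (fun p => |q p * ftilX p.1 - ftil p|) (μ.prod ν) :=
    ((hq.integrable_mul_comp_fst hftilX_int).sub hftil_int).abs
  have hdiff_int : Integrable (fun x => |ftilX x - fX x|) μ := (hftilX_int.sub hfX_int).abs
  have hweighted_int := hq.integrable_mul_comp_fst hdiff_int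
  have hdist_int : Integrable (fun p => |ftil p - f p|) (μ.prod ν) := (hftil_int.sub hf_int).abs
  calc ∫ p, |q p * fX p.1 - f p| ∂(μ.prod ν)
      ≤ ∫ p, |q p * ftilX p.1 - ftil p| + q p * |ftilX p.1 - fX p.1| + |ftil p - f p|
          ∂(μ.prod ν) :=
        integral_mono_of_nonneg (ae_of_all _ fun _ => abs_nonneg _)
          ((hgtil_int.add hweighted_int).add hdist_int)
          (ae_of_all _ fun p => abs_mul_sub_le_of_nonneg (hq_nonneg p))
    _ = (∫ p, |q p * ftilX p.1 - ftil p| ∂(μ.prod ν)) + ∫ x, |ftilX x - fX x| ∂μ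
          + ∫ p, |ftil p - f p| ∂(μ.prod ν) := by
        rw [integral_add (f := fun p => _ + _) (hgtil_int.add hweighted_int) hdist_int,
          integral_add hgtil_int hweighted_int, hq.integral_mul_comp_fst hdiff_int]
    _ ≤ _ := by linarith

/-- Triangle-inequality decomposition at the end of the proof of Theorem 2 (large
support): for a conditional density `q` and joint densities `f`, `f̃` with marginals
`f_X`, `f̃_X`, the `f_X`-weighted `L¹` distance between `q` and the conditional density of
`f` is at most the corresponding distance for `f̃` plus twice the joint `L¹` distance
between `f̃` and `f`. -/
theorem stmt12 {α β : Type*} [MeasurableSpace α] [MeasurableSpace β]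
    (μ : Measure α) (ν : Measure β) [SigmaFinite μ] [SigmaFinite ν]
    (f ftil : α × β → ℝ)
    (hf_nonneg : ∀ p, 0 ≤ f p) (hftil_nonneg : ∀ p, 0 ≤ ftil p)
    (hf_int : Integrable f (μ.prod ν)) (hftil_int : Integrable ftil (μ.prod ν))
    (fX ftilX : α → ℝ)
    (hfX : ∀ x, fX x = ∫ y, f (x, y) ∂ν) (hftilX : ∀ x, ftilX x = ∫ y, ftil (x, y) ∂ν)
    (q : α × β → ℝ) (hq_meas : Measurable q) (hq_nonneg : ∀ p, 0 ≤ q p)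
    (hq_int : ∀ x, ∫ y, q (x, y) ∂ν = 1) :
    ∫ p, |q p * fX p.1 - f p| ∂(μ.prod ν)
      ≤ (∫ p, |q p * ftilX p.1 - ftil p| ∂(μ.prod ν))
        + 2 * ∫ p, |ftil p - f p| ∂(μ.prod ν) :=
  stmt12_general μ ν f ftil hf_int hftil_int fX ftilX hfX hftilX q hq_meas hq_nonneg hq_int
end

section
/- Let (β, ℬ, ν) be a measure space and let f, g : β → [0,∞) be measurable with f(y) ≤ g(y) for all y, ∫ f dν = 1, and G := ∫ g dν < ∞. Then ∫ f(y) · ( log f(y) − log g(y) + log G ) dν(y) ≤ log G. -/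
open MeasureTheory

/-- Single-block Kullback–Leibler bound in the proof of Theorem 4 (weak posterior
consistency): if `g` is an integrable upper envelope of a probability density `f` with
`G = ∫ g dν`, then the KL divergence from `f` to the normalized envelope `g/G`, namely
`∫ f (log f − log g + log G) dν`, is at most `log G`. -/
theorem stmt13 {β : Type*} [MeasurableSpace β] (ν : Measure β)
    (f g : β → ℝ) (hf_meas : Measurable f) (hg_meas : Measurable g)
    (hf_nonneg : ∀ y, 0 ≤ f y) (hfg : ∀ y, f y ≤ g y)
    (hf_int : ∫ y, f y ∂ν = 1) (hg_int : Integrable g ν) :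
    ∫ y, f y * (Real.log (f y) - Real.log (g y) + Real.log (∫ z, g z ∂ν)) ∂ν
      ≤ Real.log (∫ z, g z ∂ν) := by
  set G := ∫ z, g z ∂ν with hG
  have hf_integrable : Integrable f ν := by
    refine hg_int.mono' hf_meas.aestronglyMeasurable ?_
    filter_upwards with y
    rw [Real.norm_eq_abs, abs_of_nonneg (hf_nonneg y)]
    exact hfg y
  have hG1 : 1 ≤ G := by
    rw [← hf_int]; exact integral_mono hf_integrable hg_int hfg
  have hlogG : 0 ≤ Real.log G := Real.log_nonneg hG1
  have hpt : ∀ y, f y * (Real.log (f y) - Real.log (g y) + Real.log G)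
      ≤ f y * Real.log G := by
    intro y
    have h1 : f y * (Real.log (f y) - Real.log (g y)) ≤ 0 := by
      rcases eq_or_lt_of_le (hf_nonneg y) with h0 | h0
      · simp [← h0]
      · have : Real.log (f y) ≤ Real.log (g y) := Real.log_le_log h0 (hfg y)
        exact mul_nonpos_of_nonneg_of_nonpos h0.le (by linarith)
    nlinarith [h1]
  by_cases hint : Integrable (fun y => f y * (Real.log (f y) - Real.log (g y) + Real.log G)) ν
  · calc ∫ y, f y * (Real.log (f y) - Real.log (g y) + Real.log G) ∂ν
        ≤ ∫ y, f y * Real.log G ∂ν :=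
          integral_mono hint (hf_integrable.mul_const _) hpt
      _ = Real.log G := by rw [integral_mul_const, hf_int, one_mul]
  · rw [integral_undef hint]; exact hlogG
end

section
/- Let (α, 𝒜, μ) and (β, ℬ, ν) be σ-finite measure spaces, and let f : α × β → [0,∞) be measurable with ∫ f d(μ×ν) = 1; set f_X(x) := ∫ f(x,y) dν(y). Let A_1, …, A_K be a measurable partition of α, and for each i let g_i : β → (0,∞) be measurable with 0 < ∫ g_i dν < ∞ and f(x,y) ≤ f_X(x) · g_i(y) for all x ∈ A_i and all y ∈ β. Define h(x,y) := g_i(y) / ∫ g_i dν for x ∈ A_i. Then 0 ≤ ∫_{{(x,y) : f(x,y) > 0}} f(x,y) · log( f(x,y) / (f_X(x) · h(x,y)) ) d(μ×ν) ≤ log( ∑_{i=1}^K (∫_{A_i} f_X dμ) · (∫_β g_i dν) ). -/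
/-!
On the block `A i` the density `h` is `g i / ∫ g i`, so the domination `f ≤ f_X * g i` says
exactly that `f / (f_X * h) ≤ ∫ g i` there. Hence the integrand is at most `f * log (∫ g i)` on
`A i × β`, and integrating gives `∑ i, w i * log (∫ g i)` with `w i = ∫_{A i} f_X`; since the
weights `w i` sum to `∫ f = 1`, concavity of `log` (Jensen) bounds this by `log (∑ i, w i * ∫ g i)`.
Nonnegativity is Gibbs' inequality: `a - b ≤ a * log (a / b)` integrates to
`0 = ∫ f - ∫ f_X * h ≤ ∫ f * log (f / (f_X * h))`, because `h (x, ·)` is a probability density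
for every `x`.
If the integrand is not integrable the set integral is `0` by convention; the upper bound
survives since the domination forces `∫ g i ≥ 1` wherever `w i > 0`.
-/

open MeasureTheory Set Real

namespace Real

theorem sub_le_mul_log_div {a b : ℝ} (ha : 0 < a) (hb : 0 < b) : a - b ≤ a * log (a / b) := by
  have h := mul_le_mul_of_nonneg_left (log_le_sub_one_of_pos (div_pos hb ha)) ha.le
  have hl : log (b / a) = -log (a / b) := by rw [← log_inv, inv_div]
  rw [hl] at h
  have h' : a * (b / a - 1) = b - a := by field_simp
  linarith

theorem mul_log_div_le_mul_log {a q c : ℝ} (ha : 0 < a) (hq : 0 < q) (hle : a ≤ c * q) :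
    a * log (a / q) ≤ a * log c :=
  mul_le_mul_of_nonneg_left (log_le_log (div_pos ha hq) ((div_le_iff₀ hq).2 hle)) ha.le

theorem sum_mul_log_le_log_sum_mul {ι : Type*} (s : Finset ι) {w c : ι → ℝ}
    (hw : ∀ i ∈ s, 0 ≤ w i) (hw_sum : ∑ i ∈ s, w i = 1) (hc : ∀ i ∈ s, 0 < c i) :
    ∑ i ∈ s, w i * log (c i) ≤ log (∑ i ∈ s, w i * c i) := by
  simpa only [smul_eq_mul] using strictConcaveOn_log_Ioi.concaveOn.le_map_sum hw hw_sum hc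

end Real

theorem setIntegral_mul_log_div_nonneg {Ω : Type*} [MeasurableSpace Ω] {P : Measure Ω}
    {f q : Ω → ℝ} (hf_meas : Measurable f) (hf : Integrable f P) (hq : Integrable q P)
    (hq_nonneg : ∀ p, 0 ≤ q p) (hfq : ∀ p, 0 < f p → 0 < q p)
    (hint : ∫ p, q p ∂P ≤ ∫ p, f p ∂P) :
    0 ≤ ∫ p in {p | 0 < f p}, f p * log (f p / q p) ∂P := by
  set S := {p | 0 < f p}
  have hS : MeasurableSet S := measurableSet_lt measurable_const hf_meas
  by_cases hφ : IntegrableOn (fun p => f p * log (f p / q p)) S P; swap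
  · rw [integral_undef hφ]
  have hfS : ∫ p, f p ∂P ≤ ∫ p in S, f p ∂P := by
    rw [← integral_add_compl hS hf]
    linarith [setIntegral_nonpos (μ := P) hS.compl fun p (hp : ¬ 0 < f p) => not_lt.1 hp]
  have hqS : ∫ p in S, q p ∂P ≤ ∫ p, q p ∂P :=
    setIntegral_le_integral hq (ae_of_all _ hq_nonneg)
  calc (0 : ℝ) ≤ ∫ p in S, f p ∂P - ∫ p in S, q p ∂P := by linarith
    _ = ∫ p in S, (f p - q p) ∂P := (integral_sub hf.integrableOn hq.integrableOn).symm
    _ ≤ ∫ p in S, f p * log (f p / q p) ∂P :=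
      setIntegral_mono_on (hf.sub hq).integrableOn hφ hS fun p hp =>
        sub_le_mul_log_div hp (hfq p hp)

structure IsMeasurablePartition {Ω ι : Type*} [MeasurableSpace Ω] (B : ι → Set Ω) : Prop where
  measurableSet : ∀ i, MeasurableSet (B i)
  disjoint : Pairwise fun i j => Disjoint (B i) (B j)
  iUnion_eq_univ : ⋃ i, B i = univ

namespace IsMeasurablePartition

variable {Ω ι : Type*} [MeasurableSpace Ω] {B : ι → Set Ω}

theorem exists_mem (hB : IsMeasurablePartition B) (x : Ω) : ∃ i, x ∈ B i :=
  mem_iUnion.1 (hB.iUnion_eq_univ ▸ mem_univ x)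

theorem sum_indicator_apply {M : Type*} [AddCommMonoid M] [Fintype ι]
    (hB : IsMeasurablePartition B) (r : ι → Ω → M) {i : ι} {x : Ω} (hx : x ∈ B i) :
    ∑ j, (B j).indicator (r j) x = r i x := by
  rw [Finset.sum_eq_single i (fun j _ hj => indicator_of_notMem
    (fun hxj => (hB.disjoint hj).le_bot ⟨hxj, hx⟩) _) (by simp), indicator_of_mem hx]

theorem prod_univ {β : Type*} [MeasurableSpace β] {A : ι → Set Ω}
    (hA : IsMeasurablePartition A) :
    IsMeasurablePartition fun i => A i ×ˢ (univ : Set β) where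
  measurableSet i := (hA.measurableSet i).prod MeasurableSet.univ
  disjoint i j hij := disjoint_prod.2 (Or.inl (hA.disjoint hij))
  iUnion_eq_univ := by rw [← iUnion_prod_const, hA.iUnion_eq_univ, univ_prod_univ]

variable [Fintype ι] {P : Measure Ω} {φ : Ω → ℝ}

theorem integrable_of_integrableOn (hB : IsMeasurablePartition B)
    (hφ : ∀ i, IntegrableOn φ (B i) P) : Integrable φ P := by
  rw [← integrableOn_univ, ← hB.iUnion_eq_univ]
  exact integrableOn_finite_iUnion.2 hφ

theorem integral_eq_sum (hB : IsMeasurablePartition B) (hφ : ∀ i, IntegrableOn φ (B i) P) :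
    ∫ p, φ p ∂P = ∑ i, ∫ p in B i, φ p ∂P := by
  rw [← integral_iUnion_fintype hB.measurableSet hB.disjoint hφ, hB.iUnion_eq_univ,
    Measure.restrict_univ]

theorem integral_le_sum (hB : IsMeasurablePartition B) (hφ : Integrable φ P)
    {ψ : ι → Ω → ℝ} (hψ : ∀ i, IntegrableOn (ψ i) (B i) P) (hle : ∀ i, ∀ p ∈ B i, φ p ≤ ψ i p) :
    ∫ p, φ p ∂P ≤ ∑ i, ∫ p in B i, ψ i p ∂P := by
  rw [hB.integral_eq_sum fun i => hφ.integrableOn]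
  exact Finset.sum_le_sum fun i _ =>
    setIntegral_mono_on hφ.integrableOn (hψ i) (hB.measurableSet i) (hle i)

end IsMeasurablePartition

theorem setIntegral_marginal_le_mul_integral {α β : Type*} [MeasurableSpace α]
    [MeasurableSpace β] {μ : Measure α} {ν : Measure β} [SigmaFinite ν] {f : α × β → ℝ}
    {s : Set α} {g : β → ℝ} (hs : MeasurableSet s)
    (hf : Integrable f (μ.prod ν)) (hg : Integrable g ν)
    (hdom : ∀ x ∈ s, ∀ y, f (x, y) ≤ (∫ y, f (x, y) ∂ν) * g y) :
    ∫ x in s, ∫ y, f (x, y) ∂ν ∂μ ≤ (∫ x in s, ∫ y, f (x, y) ∂ν ∂μ) * ∫ y, g y ∂ν := by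
  rw [← integral_mul_const]
  refine setIntegral_mono_on hf.integral_prod_left.integrableOn
    (hf.integral_prod_left.mul_const _).integrableOn hs fun x hx => ?_
  by_cases hfx : Integrable (fun y => f (x, y)) ν
  · rw [← integral_const_mul]
    exact integral_mono hfx (hg.const_mul _) (hdom x hx)
  · simp [integral_undef hfx]

section BlockDensity

variable {α β ι : Type*} [MeasurableSpace α] [MeasurableSpace β] [Fintype ι]
  {μ : Measure α} {ν : Measure β} {A : ι → Set α} {g : ι → β → ℝ} {f : α × β → ℝ}

noncomputable def blockDensity (A : ι → Set α) (g : ι → β → ℝ) (ν : Measure β) (p : α × β) : ℝ :=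
  ∑ i, (A i).indicator (fun _ => g i p.2 / ∫ y, g i y ∂ν) p.1

theorem blockDensity_of_mem (hA : IsMeasurablePartition A) {i : ι} {p : α × β}
    (hp : p.1 ∈ A i) : blockDensity A g ν p = g i p.2 / ∫ y, g i y ∂ν :=
  hA.sum_indicator_apply _ hp

theorem blockDensity_pos (hA : IsMeasurablePartition A) (hg_pos : ∀ i y, 0 < g i y)
    (hg_int_pos : ∀ i, 0 < ∫ y, g i y ∂ν) (p : α × β) : 0 < blockDensity A g ν p := by
  obtain ⟨i, hi⟩ := hA.exists_mem p.1
  rw [blockDensity_of_mem hA hi]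
  exact div_pos (hg_pos i p.2) (hg_int_pos i)

theorem integrableOn_mul_blockDensity (hA : IsMeasurablePartition A) {a : α → ℝ}
    (ha : Integrable a μ) (hg : ∀ i, Integrable (g i) ν) (i : ι) :
    IntegrableOn (fun p => a p.1 * blockDensity A g ν p) (A i ×ˢ univ) (μ.prod ν) :=
  (ha.mul_prod ((hg i).div_const _)).integrableOn.congr_fun
    (fun p hp => by rw [blockDensity_of_mem hA hp.1]) (hA.prod_univ.measurableSet i)

theorem integrable_mul_blockDensity (hA : IsMeasurablePartition A) {a : α → ℝ}
    (ha : Integrable a μ) (hg : ∀ i, Integrable (g i) ν) :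
    Integrable (fun p => a p.1 * blockDensity A g ν p) (μ.prod ν) :=
  hA.prod_univ.integrable_of_integrableOn (integrableOn_mul_blockDensity hA ha hg)

theorem marginal_mul_blockDensity_pos (hA : IsMeasurablePartition A)
    (hg_pos : ∀ i y, 0 < g i y) (hg_int_pos : ∀ i, 0 < ∫ y, g i y ∂ν)
    (hdom : ∀ i, ∀ x ∈ A i, ∀ y, f (x, y) ≤ (∫ y, f (x, y) ∂ν) * g i y)
    {p : α × β} (hp : 0 < f p) : 0 < (∫ y, f (p.1, y) ∂ν) * blockDensity A g ν p := by
  obtain ⟨i, hi⟩ := hA.exists_mem p.1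
  exact mul_pos (pos_of_mul_pos_left (hp.trans_le (hdom i p.1 hi p.2)) (hg_pos i p.2).le)
    (blockDensity_pos hA hg_pos hg_int_pos p)

variable [SigmaFinite μ] [SigmaFinite ν]

theorem integral_mul_blockDensity (hA : IsMeasurablePartition A) {a : α → ℝ}
    (ha : Integrable a μ) (hg : ∀ i, Integrable (g i) ν) (hg_int_ne : ∀ i, ∫ y, g i y ∂ν ≠ 0) :
    ∫ p, a p.1 * blockDensity A g ν p ∂(μ.prod ν) = ∫ x, a x ∂μ := by
  rw [hA.prod_univ.integral_eq_sum (integrableOn_mul_blockDensity hA ha hg),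
    hA.integral_eq_sum fun i => ha.integrableOn]
  refine Finset.sum_congr rfl fun i _ => ?_
  rw [setIntegral_congr_fun (hA.prod_univ.measurableSet i)
      (g := fun p => a p.1 * (g i p.2 / ∫ y, g i y ∂ν))
      (fun p hp => by rw [blockDensity_of_mem hA hp.1]),
    setIntegral_prod_mul a (fun y => g i y / ∫ y, g i y ∂ν), Measure.restrict_univ, integral_div,
    div_self (hg_int_ne i), mul_one]

theorem setIntegral_mul_log_div_marginal_mul_blockDensity_le (hA : IsMeasurablePartition A)
    (hf_meas : Measurable f) (hf_nonneg : ∀ p, 0 ≤ f p) (hf : Integrable f (μ.prod ν))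
    (hg_pos : ∀ i y, 0 < g i y) (hg_int_pos : ∀ i, 0 < ∫ y, g i y ∂ν)
    (hdom : ∀ i, ∀ x ∈ A i, ∀ y, f (x, y) ≤ (∫ y, f (x, y) ∂ν) * g i y)
    (hint : IntegrableOn (fun p => f p * log (f p / ((∫ y, f (p.1, y) ∂ν) * blockDensity A g ν p)))
      {p | 0 < f p} (μ.prod ν)) :
    ∫ p in {p | 0 < f p}, f p * log (f p / ((∫ y, f (p.1, y) ∂ν) * blockDensity A g ν p))
        ∂(μ.prod ν)
      ≤ ∑ i, (∫ x in A i, ∫ y, f (x, y) ∂ν ∂μ) * log (∫ y, g i y ∂ν) := by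
  set S := {p : α × β | 0 < f p}
  have hS : MeasurableSet S := measurableSet_lt measurable_const hf_meas
  rw [← integral_indicator hS]
  refine (hA.prod_univ.integral_le_sum (hint.integrable_indicator hS)
    (ψ := fun i p => f p * log (∫ y, g i y ∂ν)) (fun i => (hf.mul_const _).integrableOn)
    fun i p hp => ?_).trans_eq ?_
  · by_cases hpS : p ∈ S
    · rw [indicator_of_mem hpS]
      refine mul_log_div_le_mul_log hpS
        (marginal_mul_blockDensity_pos hA hg_pos hg_int_pos hdom hpS) ?_
      rw [blockDensity_of_mem hA hp.1]
      calc f p ≤ (∫ y, f (p.1, y) ∂ν) * g i p.2 := hdom i p.1 hp.1 p.2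
        _ = (∫ y, g i y ∂ν) * ((∫ y, f (p.1, y) ∂ν) * (g i p.2 / ∫ y, g i y ∂ν)) := by
          field_simp [(hg_int_pos i).ne']
    · have hfp : f p = 0 := le_antisymm (not_lt.1 hpS) (hf_nonneg p)
      simp [indicator_of_notMem hpS, hfp]
  · refine Finset.sum_congr rfl fun i _ => ?_
    rw [integral_mul_const, setIntegral_prod _ hf.integrableOn, Measure.restrict_univ]

end BlockDensity

theorem stmt14_general {α β : Type*} [MeasurableSpace α] [MeasurableSpace β]
    (μ : Measure α) (ν : Measure β) [SigmaFinite μ] [SigmaFinite ν]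
    (f : α × β → ℝ) (hf_meas : Measurable f) (hf_nonneg : ∀ p, 0 ≤ f p)
    (hf_int : ∫ p, f p ∂(μ.prod ν) = 1)
    (fX : α → ℝ) (hfX : ∀ x, fX x = ∫ y, f (x, y) ∂ν)
    (K : ℕ) (A : Fin K → Set α) (hA_meas : ∀ i, MeasurableSet (A i))
    (hA_disj : Pairwise fun i j => Disjoint (A i) (A j))
    (hA_cover : (⋃ i, A i) = Set.univ)
    (g : Fin K → β → ℝ) (hg_pos : ∀ i y, 0 < g i y)
    (hg_intble : ∀ i, Integrable (g i) ν) (hg_int_pos : ∀ i, 0 < ∫ y, g i y ∂ν)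
    (hdom : ∀ i, ∀ x ∈ A i, ∀ y, f (x, y) ≤ fX x * g i y)
    (h : α × β → ℝ)
    (hh : ∀ p : α × β,
      h p = ∑ i, Set.indicator (A i) (fun _ => g i p.2 / ∫ y, g i y ∂ν) p.1) :
    0 ≤ ∫ p in {p : α × β | 0 < f p},
          f p * Real.log (f p / (fX p.1 * h p)) ∂(μ.prod ν) ∧
    ∫ p in {p : α × β | 0 < f p}, f p * Real.log (f p / (fX p.1 * h p)) ∂(μ.prod ν)
      ≤ Real.log (∑ i, (∫ x in A i, fX x ∂μ) * ∫ y, g i y ∂ν) := by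
  obtain rfl : fX = fun x => ∫ y, f (x, y) ∂ν := funext hfX
  obtain rfl : h = blockDensity A g ν := funext hh
  have hA : IsMeasurablePartition A := ⟨hA_meas, hA_disj, hA_cover⟩
  have hf : Integrable f (μ.prod ν) := .of_integral_ne_zero (by simp [hf_int])
  have hw_sum : ∑ i, ∫ x in A i, ∫ y, f (x, y) ∂ν ∂μ = 1 := by
    rw [← hA.integral_eq_sum fun i => hf.integral_prod_left.integrableOn, ← integral_prod f hf,
      hf_int]
  refine ⟨setIntegral_mul_log_div_nonneg hf_meas hf
    (integrable_mul_blockDensity hA hf.integral_prod_left hg_intble)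
    (fun p => mul_nonneg (integral_nonneg fun y => hf_nonneg _)
      (blockDensity_pos hA hg_pos hg_int_pos p).le)
    (fun p => marginal_mul_blockDensity_pos hA hg_pos hg_int_pos hdom)
    ((integral_mul_blockDensity hA hf.integral_prod_left hg_intble
      fun i => (hg_int_pos i).ne').trans (integral_prod f hf).symm).le, ?_⟩
  by_cases hint : IntegrableOn
      (fun p => f p * log (f p / ((∫ y, f (p.1, y) ∂ν) * blockDensity A g ν p)))
      {p | 0 < f p} (μ.prod ν)
  · calc _ ≤ ∑ i, (∫ x in A i, ∫ y, f (x, y) ∂ν ∂μ) * log (∫ y, g i y ∂ν) :=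
          setIntegral_mul_log_div_marginal_mul_blockDensity_le hA hf_meas hf_nonneg hf hg_pos
            hg_int_pos hdom hint
      _ ≤ _ := sum_mul_log_le_log_sum_mul _ (fun i _ => setIntegral_nonneg (hA_meas i)
          fun x _ => integral_nonneg fun y => hf_nonneg _) hw_sum fun i _ => hg_int_pos i
  · rw [integral_undef hint]
    exact log_nonneg (hw_sum.symm.trans_le (Finset.sum_le_sum fun i _ =>
      setIntegral_marginal_le_mul_integral (hA_meas i) hf (hg_intble i) (hdom i)))

/-- Main chained inequality in the proof of Theorem 4 (weak posterior consistency): for a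
joint density `f` with marginal `f_X`, a measurable partition `A_1, …, A_K` of the
predictor space, and positive integrable envelopes `g_i` dominating the conditional
density on each block, the KL divergence from the true conditional density to the
normalized piecewise-constant conditional density `h` is nonnegative and at most
`log(∑ i (∫_{A_i} f_X dμ)(∫ g_i dν))`. -/
theorem stmt14 {α β : Type*} [MeasurableSpace α] [MeasurableSpace β]
    (μ : Measure α) (ν : Measure β) [SigmaFinite μ] [SigmaFinite ν]
    (f : α × β → ℝ) (hf_meas : Measurable f) (hf_nonneg : ∀ p, 0 ≤ f p)
    (hf_int : ∫ p, f p ∂(μ.prod ν) = 1)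
    (fX : α → ℝ) (hfX : ∀ x, fX x = ∫ y, f (x, y) ∂ν)
    (K : ℕ) (A : Fin K → Set α) (hA_meas : ∀ i, MeasurableSet (A i))
    (hA_disj : Pairwise fun i j => Disjoint (A i) (A j))
    (hA_cover : (⋃ i, A i) = Set.univ)
    (g : Fin K → β → ℝ) (hg_meas : ∀ i, Measurable (g i)) (hg_pos : ∀ i y, 0 < g i y)
    (hg_intble : ∀ i, Integrable (g i) ν) (hg_int_pos : ∀ i, 0 < ∫ y, g i y ∂ν)
    (hdom : ∀ i, ∀ x ∈ A i, ∀ y, f (x, y) ≤ fX x * g i y)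
    (h : α × β → ℝ)
    (hh : ∀ p : α × β,
      h p = ∑ i, Set.indicator (A i) (fun _ => g i p.2 / ∫ y, g i y ∂ν) p.1) :
    0 ≤ ∫ p in {p : α × β | 0 < f p},
          f p * Real.log (f p / (fX p.1 * h p)) ∂(μ.prod ν) ∧
    ∫ p in {p : α × β | 0 < f p}, f p * Real.log (f p / (fX p.1 * h p)) ∂(μ.prod ν)
      ≤ Real.log (∑ i, (∫ x in A i, fX x ∂μ) * ∫ y, g i y ∂ν) :=
  stmt14_general μ ν f hf_meas hf_nonneg hf_int fX hfX K A hA_meas hA_disj hA_cover g hg_pos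
    hg_intble hg_int_pos hdom h hh
end
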